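/- Let N ≥ 1, let w ∈ ℝ^N, δ > 0, and let C be the hypercube with vertices v_γ = w + δγ, γ ∈ {0,1}^N. Let f be a real-valued function defined on the vertices of C together with the points v_γ + (−1)^{γ_j}δe_j (1 ≤ j ≤ N, γ ∈ {0,1}^N), i.e. on all vertices of C and of its axis-neighbouring reflections; in particular it suffices that f is defined on C itself, since v_γ + (−1)^{γ_j}δe_j is again a vertex of C. Then for every z in the interior of C and every j ∈ {1,…,N}, the j-th partial derivative of Λ(f,C) at z equals Σ_{γ∈{0,1}^N} (∏_{i=1}^N (1 − γ_i + (−1)^{γ_i+1}(z_i − w_i)/δ)) · (f(v_γ + (−1)^{γ_j}δe_j) − f(v_γ)) / ((−1)^{γ_j}δ); consequently the total derivative DΛ(f,C)(z), viewed as a vector in ℝ^N, is the convex combination Σ_{γ∈{0,1}^N} (∏_{i=1}^N (1 − γ_i + (−1)^{γ_i+1}(z_i − w_i)/δ)) · ((f(v_γ + (−1)^{γ_j}δe_j) − f(v_γ))/((−1)^{γ_j}δ))_{j=1}^N, and in particular lies in the convex hull of the vectors ((f(v_γ + (−1)^{γ_j}δe_j) − f(v_γ))/((−1)^{γ_j}δ))_{j=1}^N,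 γ ∈ {0,1}^N. -/

import Mathlib

/-- The vertex `v_γ = w + δγ` of the hypercube, for `γ ∈ {0,1}^N`. -/
def cubeVertex {N : ℕ} (w : Fin N → ℝ) (δ : ℝ) (γ : Fin N → Bool) : Fin N → ℝ :=
  fun i => w i + if γ i then δ else 0

/-- The coefficient `∏_i (1 - γ_i + (-1)^{γ_i+1}(x_i - w_i)/δ)`. -/
noncomputable def interpCoeff {N : ℕ} (w : Fin N → ℝ) (δ : ℝ) (x : Fin N → ℝ)
    (γ : Fin N → Bool) : ℝ :=
  ∏ i, if γ i then (x i - w i) / δ else 1 - (x i - w i) / δ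

/-- The coordinatewise affine interpolation `Λ(f,C)` of `f` on the hypercube with
vertices `v_γ = w + δγ`, `γ ∈ {0,1}^N`. -/
noncomputable def interpLam {N : ℕ} (w : Fin N → ℝ) (δ : ℝ) (f : (Fin N → ℝ) → ℝ)
    (x : Fin N → ℝ) : ℝ :=
  ∑ γ : Fin N → Bool, interpCoeff w δ x γ * f (cubeVertex w δ γ)

/-- The sign `(-1)^{γ_j}`. -/
def vertexSign {N : ℕ} (γ : Fin N → Bool) (j : Fin N) : ℝ := if γ j then -1 else 1

/-- The difference quotient vector
`((f(v_γ + (-1)^{γ_j} δ e_j) - f(v_γ)) / ((-1)^{γ_j} δ))_{j=1}^N`. -/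
noncomputable def diffQuot {N : ℕ} (w : Fin N → ℝ) (δ : ℝ) (f : (Fin N → ℝ) → ℝ)
    (γ : Fin N → Bool) : Fin N → ℝ :=
  fun j => (f (cubeVertex w δ γ + (vertexSign γ j * δ) • (Pi.single j (1 : ℝ) : Fin N → ℝ)) -
      f (cubeVertex w δ γ)) / (vertexSign γ j * δ)

/-!
Along each coordinate `Λ(f,C)` is affine, with `∂_j Λ = ∑_γ (∂_j c_γ) f(v_γ)` for the
product weights `c_γ`. Pairing `γ` with the vertex obtained by flipping its `j`-th bit is a
summation by parts which rewrites this as `∑_γ c_γ` times the difference quotient along the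
edge through `v_γ` in direction `e_j`. On `C` the weights are nonnegative and sum to `1`, so the
gradient is a convex combination of the difference-quotient vectors.
-/

open Finset Function

section OneDim

/-- `interpCoeff w δ x γ` is definitionally `∏ i, coordWeight (w i) δ (γ i) (x i)`. -/
noncomputable def coordWeight (a δ : ℝ) (b : Bool) (t : ℝ) : ℝ :=
  if b then (t - a) / δ else 1 - (t - a) / δ

variable {a δ t : ℝ}

theorem coordWeight_add_coordWeight_not (b : Bool) :
    coordWeight a δ b t + coordWeight a δ (!b) t = 1 := by
  cases b <;> simp [coordWeight]

theorem hasDerivAt_coordWeight (b : Bool) :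
    HasDerivAt (coordWeight a δ b) (if b then δ⁻¹ else -δ⁻¹) t := by
  have h := ((hasDerivAt_id t).sub_const a).div_const δ
  unfold coordWeight
  cases b
  · simpa using h.const_sub 1
  · simpa using h

theorem coordWeight_nonneg (hδ : 0 < δ) (ht : t ∈ Set.Icc a (a + δ)) (b : Bool) :
    0 ≤ coordWeight a δ b t := by
  obtain ⟨hat, hta⟩ := ht
  cases b
  · simp only [coordWeight, Bool.false_eq_true, if_false, sub_nonneg, div_le_one hδ]
    linarith
  · exact div_nonneg (by linarith) hδ.le

end OneDim

def flipCoord {ι : Type*} [DecidableEq ι] (j : ι) (γ : ι → Bool) : ι → Bool :=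
  update γ j (!γ j)

theorem flipCoord_involutive {ι : Type*} [DecidableEq ι] (j : ι) :
    Involutive (flipCoord j) := by
  intro γ
  funext i
  rcases eq_or_ne i j with rfl | h <;> simp [flipCoord, update_of_ne, *]

theorem flipCoord_apply_of_ne {ι : Type*} [DecidableEq ι] {j i : ι} (h : i ≠ j) (γ : ι → Bool) :
    flipCoord j γ i = γ i :=
  update_of_ne h _ _

variable {N : ℕ}

theorem vertexSign_flipCoord (γ : Fin N → Bool) (j : Fin N) :
    vertexSign (flipCoord j γ) j = -vertexSign γ j := by
  cases h : γ j <;> simp [vertexSign, flipCoord, h]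

theorem cubeVertex_add_smul_single (w : Fin N → ℝ) (δ : ℝ) (γ : Fin N → Bool) (j : Fin N) :
    cubeVertex w δ γ + (vertexSign γ j * δ) • (Pi.single j (1 : ℝ) : Fin N → ℝ)
      = cubeVertex w δ (flipCoord j γ) := by
  funext i
  rcases eq_or_ne i j with rfl | h
  · cases hγ : γ i <;> simp [cubeVertex, vertexSign, flipCoord, hγ]
  · simp [cubeVertex, flipCoord_apply_of_ne h, Pi.single_eq_of_ne h]

section Coefficients

variable (w : Fin N → ℝ) (δ : ℝ) (x : Fin N → ℝ)

theorem interpCoeff_eq_mul_prod_erase (γ : Fin N → Bool) (j : Fin N) :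
    interpCoeff w δ x γ = coordWeight (w j) δ (γ j) (x j) *
      ∏ i ∈ univ.erase j, coordWeight (w i) δ (γ i) (x i) :=
  (mul_prod_erase univ (fun i => coordWeight (w i) δ (γ i) (x i)) (mem_univ j)).symm

/-- The partial derivative `∂_j` of `x ↦ interpCoeff w δ x γ`. -/
noncomputable def interpCoeffPartial (j : Fin N) (γ : Fin N → Bool) : ℝ :=
  (if γ j then δ⁻¹ else -δ⁻¹) * ∏ i ∈ univ.erase j, coordWeight (w i) δ (γ i) (x i)

theorem prod_erase_coordWeight_flipCoord (γ : Fin N → Bool) (j : Fin N) :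
    ∏ i ∈ univ.erase j, coordWeight (w i) δ (flipCoord j γ i) (x i)
      = ∏ i ∈ univ.erase j, coordWeight (w i) δ (γ i) (x i) :=
  prod_congr rfl fun _ hi => by rw [flipCoord_apply_of_ne (ne_of_mem_erase hi)]

theorem interpCoeff_add_interpCoeff_flipCoord (γ : Fin N → Bool) (j : Fin N) :
    interpCoeff w δ x γ + interpCoeff w δ x (flipCoord j γ)
      = ∏ i ∈ univ.erase j, coordWeight (w i) δ (γ i) (x i) := by
  rw [interpCoeff_eq_mul_prod_erase w δ x γ j, interpCoeff_eq_mul_prod_erase w δ x _ j,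
    prod_erase_coordWeight_flipCoord, ← add_mul, flipCoord, update_self,
    coordWeight_add_coordWeight_not, one_mul]

theorem sum_interpCoeff_eq_one : ∑ γ : Fin N → Bool, interpCoeff w δ x γ = 1 := by
  have h := prod_univ_sum (fun _ : Fin N => (univ : Finset Bool))
    (fun i b => coordWeight (w i) δ b (x i))
  rw [Fintype.piFinset_univ] at h
  rw [show ∑ γ, interpCoeff w δ x γ = ∑ γ : Fin N → Bool, ∏ i, coordWeight (w i) δ (γ i) (x i)
    from rfl, ← h]
  exact prod_eq_one fun i _ => by
    simpa [Fintype.sum_bool] using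
      coordWeight_add_coordWeight_not (a := w i) (δ := δ) (t := x i) true

theorem hasDerivAt_interpCoeff_update (z : Fin N → ℝ) (j : Fin N) (γ : Fin N → Bool) :
    HasDerivAt (fun t => interpCoeff w δ (update z j t) γ)
      (interpCoeffPartial w δ z j γ) (z j) := by
  have h := (hasDerivAt_coordWeight (a := w j) (δ := δ) (t := z j) (γ j)).mul_const
    (∏ i ∈ univ.erase j, coordWeight (w i) δ (γ i) (z i))
  refine h.congr_of_eventuallyEq (Filter.Eventually.of_forall fun t => ?_)
  dsimp only
  rw [interpCoeff_eq_mul_prod_erase w δ _ γ j, update_self]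
  congr 1
  exact prod_congr rfl fun i hi => by rw [update_of_ne (ne_of_mem_erase hi)]

theorem hasFDerivAt_interpCoeff (γ : Fin N → Bool) :
    HasFDerivAt (fun x => interpCoeff w δ x γ)
      (∑ j, interpCoeffPartial w δ x j γ • (ContinuousLinearMap.proj j : (Fin N → ℝ) →L[ℝ] ℝ))
      x := by
  have hcoord (i : Fin N) : HasFDerivAt (fun x : Fin N → ℝ => coordWeight (w i) δ (γ i) (x i))
      ((if γ i then δ⁻¹ else -δ⁻¹) • (ContinuousLinearMap.proj i : (Fin N → ℝ) →L[ℝ] ℝ)) x :=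
    (hasDerivAt_coordWeight (γ i)).comp_hasFDerivAt x (hasFDerivAt_apply i x)
  have h := HasFDerivAt.finsetProd (u := univ) fun i _ => hcoord i
  refine h.congr_fderiv (sum_congr rfl fun j _ => ?_)
  rw [smul_smul, interpCoeffPartial, mul_comm]

end Coefficients

theorem interpCoeff_nonneg (w : Fin N → ℝ) {δ : ℝ} (hδ : 0 < δ) {x : Fin N → ℝ}
    (hx : ∀ i, x i ∈ Set.Icc (w i) (w i + δ)) (γ : Fin N → Bool) :
    0 ≤ interpCoeff w δ x γ :=
  prod_nonneg fun i _ => coordWeight_nonneg hδ (hx i) (γ i)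

/-- Summation by parts along the flip of the `j`-th coordinate. -/
theorem sum_interpCoeff_mul_diffQuot (w : Fin N → ℝ) {δ : ℝ} (hδ : δ ≠ 0)
    (f : (Fin N → ℝ) → ℝ) (x : Fin N → ℝ) (j : Fin N) :
    ∑ γ, interpCoeff w δ x γ * diffQuot w δ f γ j
      = ∑ γ, interpCoeffPartial w δ x j γ * f (cubeVertex w δ γ) := by
  set c : (Fin N → Bool) → ℝ := fun γ => interpCoeff w δ x γ / (vertexSign γ j * δ)
  have hreindex : ∑ γ, c γ * f (cubeVertex w δ (flipCoord j γ))
      = ∑ γ, c (flipCoord j γ) * f (cubeVertex w δ γ) := by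
    simpa only [flipCoord_involutive j _] using
      (flipCoord_involutive j).bijective.sum_comp
        (fun γ => c (flipCoord j γ) * f (cubeVertex w δ γ))
  calc ∑ γ, interpCoeff w δ x γ * diffQuot w δ f γ j
      = ∑ γ, c γ * f (cubeVertex w δ (flipCoord j γ)) - ∑ γ, c γ * f (cubeVertex w δ γ) := by
        rw [← sum_sub_distrib]
        refine sum_congr rfl fun γ _ => ?_
        rw [diffQuot, cubeVertex_add_smul_single]
        ring
    _ = ∑ γ, (c (flipCoord j γ) - c γ) * f (cubeVertex w δ γ) := by
        rw [hreindex, ← sum_sub_distrib]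
        simp only [sub_mul]
    _ = _ := by
        refine sum_congr rfl fun γ _ => ?_
        congr 1
        simp only [c, vertexSign_flipCoord, interpCoeffPartial,
          ← interpCoeff_add_interpCoeff_flipCoord w δ x γ j]
        cases hγ : γ j <;> simp only [vertexSign, hγ, if_true, Bool.false_eq_true, if_false] <;>
          field_simp <;> ring

section Interpolation

variable (w : Fin N → ℝ) {δ : ℝ} (f : (Fin N → ℝ) → ℝ) (z : Fin N → ℝ)

theorem hasDerivAt_interpLam_update (hδ : δ ≠ 0) (j : Fin N) :
    HasDerivAt (fun t => interpLam w δ f (update z j t))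
      (∑ γ, interpCoeff w δ z γ * diffQuot w δ f γ j) (z j) := by
  rw [sum_interpCoeff_mul_diffQuot w hδ]
  exact HasDerivAt.fun_sum fun γ _ => (hasDerivAt_interpCoeff_update w δ z j γ).mul_const _

theorem hasFDerivAt_interpLam (hδ : δ ≠ 0) :
    HasFDerivAt (interpLam w δ f)
      (∑ j, (∑ γ, interpCoeff w δ z γ * diffQuot w δ f γ j) •
        (ContinuousLinearMap.proj j : (Fin N → ℝ) →L[ℝ] ℝ)) z := by
  have h := HasFDerivAt.fun_sum (u := univ) fun γ _ =>
    (hasFDerivAt_interpCoeff w δ z γ).mul_const (f (cubeVertex w δ γ))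
  refine h.congr_fderiv ?_
  simp only [sum_interpCoeff_mul_diffQuot w hδ, sum_smul, smul_sum, smul_smul]
  rw [sum_comm]
  exact sum_congr rfl fun j _ => sum_congr rfl fun γ _ => by rw [mul_comm]

theorem gradient_interpLam_mem_convexHull (hδ : 0 < δ)
    (hz : ∀ i, z i ∈ Set.Icc (w i) (w i + δ)) :
    (fun j => ∑ γ, interpCoeff w δ z γ * diffQuot w δ f γ j)
      ∈ convexHull ℝ (Set.range (diffQuot w δ f)) := by
  have h := (convex_convexHull ℝ (Set.range (diffQuot w δ f))).sum_mem
    (fun γ _ => interpCoeff_nonneg w hδ hz γ) (sum_interpCoeff_eq_one w δ z)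
    (fun γ _ => subset_convexHull ℝ _ (Set.mem_range_self γ))
  convert h using 1
  funext j
  simp only [Finset.sum_apply, Pi.smul_apply, smul_eq_mul]

end Interpolation

theorem statement17_general {N : ℕ}
    (w : Fin N → ℝ) (δ : ℝ) (hδ : 0 < δ)
    (f : (Fin N → ℝ) → ℝ)
    (z : Fin N → ℝ)
    (hz : z ∈ interior {x : Fin N → ℝ | ∀ i, x i ∈ Set.Icc (w i) (w i + δ)}) :
    (∀ j : Fin N,
      HasDerivAt (fun t : ℝ => interpLam w δ f (Function.update z j t))
        (∑ γ : Fin N → Bool, interpCoeff w δ z γ * diffQuot w δ f γ j) (z j)) ∧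
    HasFDerivAt (interpLam w δ f)
      (∑ j : Fin N, (∑ γ : Fin N → Bool, interpCoeff w δ z γ * diffQuot w δ f γ j) •
        (ContinuousLinearMap.proj j : (Fin N → ℝ) →L[ℝ] ℝ)) z ∧
    ((fun j => ∑ γ : Fin N → Bool, interpCoeff w δ z γ * diffQuot w δ f γ j)
      ∈ convexHull ℝ (Set.range (diffQuot w δ f))) :=
  ⟨hasDerivAt_interpLam_update w f z hδ.ne', hasFDerivAt_interpLam w f z hδ.ne',
    gradient_interpLam_mem_convexHull w f z hδ (interior_subset hz)⟩

/-- Partial derivatives and total derivative of the interpolation function in the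
interior of the hypercube; the gradient is the stated convex combination of the
difference-quotient vectors, and in particular lies in their convex hull. -/
theorem statement17 {N : ℕ} (hN : 1 ≤ N)
    (w : Fin N → ℝ) (δ : ℝ) (hδ : 0 < δ)
    (f : (Fin N → ℝ) → ℝ)
    (z : Fin N → ℝ)
    (hz : z ∈ interior {x : Fin N → ℝ | ∀ i, x i ∈ Set.Icc (w i) (w i + δ)}) :
    (∀ j : Fin N,
      HasDerivAt (fun t : ℝ => interpLam w δ f (Function.update z j t))
        (∑ γ : Fin N → Bool, interpCoeff w δ z γ * diffQuot w δ f γ j) (z j)) ∧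
    HasFDerivAt (interpLam w δ f)
      (∑ j : Fin N, (∑ γ : Fin N → Bool, interpCoeff w δ z γ * diffQuot w δ f γ j) •
        (ContinuousLinearMap.proj j : (Fin N → ℝ) →L[ℝ] ℝ)) z ∧
    ((fun j => ∑ γ : Fin N → Bool, interpCoeff w δ z γ * diffQuot w δ f γ j)
      ∈ convexHull ℝ (Set.range (diffQuot w δ f))) :=
  statement17_general w δ hδ f z hz
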